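/- Under the Ewens–Pitman weight system, the conditional expectation of the number of old blocks re-observed, given only the number of blocks, satisfies E[R | K_n = j] = j − (1/(C(n,j;σ)·(θ+n)_{m↑}))·Σ_{s=1}^{n−(j−1)} binom(n,s)·(θ + n − s + σ)_{m↑}·C(s,1;σ)·C(n−s, j−1; σ). -/

import Mathlib

open Finset

attribute [local instance] Classical.propDecidable

noncomputable section

/-- Rising factorial `x(x+1)⋯(x+N−1)`. -/
def risingFac (x : ℝ) (N : ℕ) : ℝ := ∏ i ∈ Finset.range N, (x + i)

/-- Falling factorial `x(x−1)⋯(x−N+1)`. -/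
def fallingFac (x : ℝ) (N : ℕ) : ℝ := ∏ i ∈ Finset.range N, (x - i)

/-- Noncentral generalized factorial coefficient `C(N,k;σ,γ)`. -/
def gfc (N k : ℕ) (σ γ : ℝ) : ℝ :=
  (1 / (Nat.factorial k : ℝ)) *
    ∑ i ∈ Finset.range (k + 1),
      (-1 : ℝ) ^ i * (Nat.choose k i : ℝ) * risingFac (-(i : ℝ) * σ - γ) N

/-- Central generalized factorial coefficient `C(N,k;σ)`. -/
def cgfc (N k : ℕ) (σ : ℝ) : ℝ := gfc N k σ 0

/-- Binomial coefficient over `ℤ`, zero unless `0 ≤ b ≤ a`. -/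
def ibinom (a b : ℤ) : ℝ :=
  if 0 ≤ b ∧ b ≤ a then (Nat.choose a.toNat b.toNat : ℝ) else 0

/-- Multinomial coefficient `m!/((l!)^r (m−rl)!)`, zero if `rl > m`. -/
def multinom (m l r : ℕ) : ℝ :=
  if r * l ≤ m then
    (Nat.factorial m : ℝ) / ((Nat.factorial l : ℝ) ^ r * (Nat.factorial (m - r * l) : ℝ))
  else 0

/-- `P` is a set partition of the finset `s`. -/
def IsPartOn {α : Type*} (s : Finset α) (P : Finset (Finset α)) : Prop :=
  (∀ B ∈ P, B ⊆ s) ∧ ∅ ∉ P ∧ ∀ a ∈ s, ∃! B, B ∈ P ∧ a ∈ B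

/-- Restriction of a partition to `s`. -/
def restrictPart {α : Type*} [DecidableEq α] (P : Finset (Finset α)) (s : Finset α) :
    Finset (Finset α) := (P.image fun C => C ∩ s).erase ∅

/-- Gibbs probability of a partition with block sizes `|C|` and `VN k` the Gibbs weight. -/
def gibbsW {α : Type*} (σ : ℝ) (VN : ℕ → ℝ) (P : Finset (Finset α)) : ℝ :=
  VN P.card * ∏ C ∈ P, risingFac (1 - σ) (C.card - 1)

/-- Ewens–Pitman weight system. -/
def EPV (σ θ : ℝ) : ℕ → ℕ → ℝ :=
  fun N k => (∏ i ∈ Finset.range k, (θ + (i : ℝ) * σ)) / risingFac θ N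

/-- The "old" elements `{1,…,n}` inside `{1,…,n+m}`. -/
def oldSet (n m : ℕ) : Finset (Fin (n + m)) :=
  Finset.univ.filter fun x => (x : ℕ) < n

/-- Number of new elements in the block of `ρ` containing the old block `Bi`. -/
def Scount (n m : ℕ) (Bi : Finset (Fin (n + m))) (ρ : Finset (Finset (Fin (n + m)))) : ℕ :=
  ∑ C ∈ ρ.filter (fun C => Bi ⊆ C), (C \ oldSet n m).card

/-- Partitions of `{1,…,n+m}` extending the partition `πP` of the old elements. -/
def extensions (n m : ℕ) (πP : Finset (Finset (Fin (n + m)))) :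
    Finset (Finset (Finset (Fin (n + m)))) :=
  Finset.univ.filter fun ρ => IsPartOn Finset.univ ρ ∧ restrictPart ρ (oldSet n m) = πP

/-- Conditional expectation given complete information (the initial partition `πP`). -/
def condExpPi (σ : ℝ) (V : ℕ → ℕ → ℝ) (n m : ℕ) (πP : Finset (Finset (Fin (n + m))))
    (f : Finset (Finset (Fin (n + m))) → ℝ) : ℝ :=
  (∑ ρ ∈ extensions n m πP, f ρ * gibbsW σ (V (n + m)) ρ) /
    (∑ ρ ∈ extensions n m πP, gibbsW σ (V (n + m)) ρ)

/-- Partitions of `{1,…,n+m}` whose restriction to the old elements has exactly `j` blocks. -/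
def withJ (n m j : ℕ) : Finset (Finset (Finset (Fin (n + m)))) :=
  Finset.univ.filter fun ρ =>
    IsPartOn Finset.univ ρ ∧ (restrictPart ρ (oldSet n m)).card = j

/-- Partitions of `s` with exactly `j` blocks. -/
def partsJOf {α : Type*} [Fintype α] (s : Finset α) (j : ℕ) :
    Finset (Finset (Finset α)) :=
  Finset.univ.filter fun π' => IsPartOn s π' ∧ π'.card = j

/-- Conditional expectation given the incomplete information `K_n = j`. -/
def condExpK (σ : ℝ) (V : ℕ → ℕ → ℝ) (n m j : ℕ)
    (f : Finset (Finset (Fin (n + m))) → ℝ) : ℝ :=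
  (∑ ρ ∈ withJ n m j, f ρ * gibbsW σ (V (n + m)) ρ) /
    (∑ π' ∈ partsJOf (oldSet n m) j, gibbsW σ (V n) π')

/-- Number of old blocks (indexed by `B`) re-observed in the additional sample. -/
def RcntB (n m j : ℕ) (B : Fin j → Finset (Fin (n + m)))
    (ρ : Finset (Finset (Fin (n + m)))) : ℕ :=
  (Finset.univ.filter fun i : Fin j => Scount n m (B i) ρ ≠ 0).card

/-- Number of old blocks (indexed by `B`) re-observed with frequency `l`. -/
def RlcntB (n m j l : ℕ) (B : Fin j → Finset (Fin (n + m)))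
    (ρ : Finset (Finset (Fin (n + m)))) : ℕ :=
  (Finset.univ.filter fun i : Fin j => Scount n m (B i) ρ = l).card

/-- Number of blocks of the restriction whose containing block has a new element. -/
def Rcnt (n m : ℕ) (ρ : Finset (Finset (Fin (n + m)))) : ℕ :=
  ((restrictPart ρ (oldSet n m)).filter fun Bi =>
    ∃ C ∈ ρ, Bi ⊆ C ∧ (C \ oldSet n m) ≠ ∅).card

/-- Number of blocks of the restriction whose containing block has exactly `l` new elements. -/
def Rlcnt (n m l : ℕ) (ρ : Finset (Finset (Fin (n + m)))) : ℕ :=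
  ((restrictPart ρ (oldSet n m)).filter fun Bi =>
    ∃ C ∈ ρ, Bi ⊆ C ∧ (C \ oldSet n m).card = l).card

/-- Number of bijections from `Fin j` onto the blocks of `π'` satisfying `Q`. -/
def bijCount {α : Type*} [Fintype α] (j : ℕ) (π' : Finset (Finset α))
    (Q : (Fin j → Finset α) → Prop) : ℕ :=
  ((Finset.univ : Finset (Fin j → Finset α)).filter fun β =>
    Function.Injective β ∧ Finset.image β Finset.univ = π' ∧ Q β).card

/-- Conditional expectation given almost-complete information. -/
def condExpTau (σ : ℝ) (V : ℕ → ℕ → ℝ) (n m j p : ℕ) (τ : Fin p → Fin j) (nτ : Fin p → ℕ)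
    (f : Finset (Finset (Fin (n + m))) → ℝ) : ℝ :=
  (∑ ρ ∈ withJ n m j,
      (bijCount j (restrictPart ρ (oldSet n m)) (fun β => ∀ i, (β (τ i)).card = nτ i) : ℝ) *
        f ρ * gibbsW σ (V (n + m)) ρ) /
    (∑ π' ∈ partsJOf (oldSet n m) j,
      (bijCount j π' (fun β => ∀ i, (β (τ i)).card = nτ i) : ℝ) * gibbsW σ (V n) π')

/-!
Condition on the old partition `π'` with `j` blocks: then `R = j - #{B ∈ π' | B ∈ ρ}`. Adding the
`m` new points one at a time, each opens a new block or joins an existing one, and for the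
Ewens–Pitman weights the mass of the extensions that leave a set `U` of old blocks untouched is
multiplied at each step by `(θ + N - |⋃ U| + |U| σ) / (θ + N)`. Hence it equals
`p(π') (θ + n - |⋃ U| + |U| σ)_{m↑} / (θ + n)_{m↑}`, which for `U = ∅` and `U = {B}` gives the
conditional expectation given `π'`. Summing over `π'`, a partition with a marked block `B` is `B`
together with a partition of the remaining `n - |B|` points, and the weighted partition counts are
the generalized factorial coefficients: `C(N, j; σ) = σ ^ j S_σ(N, j)`.
-/

lemma risingFac_zero (x : ℝ) : risingFac x 0 = 1 := by simp [risingFac]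

lemma risingFac_succ (x : ℝ) (N : ℕ) : risingFac x (N + 1) = risingFac x N * (x + N) := by
  simp [risingFac, Finset.prod_range_succ]

lemma risingFac_succ' (x : ℝ) (N : ℕ) : risingFac x (N + 1) = x * risingFac (x + 1) N := by
  rw [risingFac, Finset.prod_range_succ', risingFac, mul_comm]
  push_cast
  rw [add_zero]
  exact congrArg _ (Finset.prod_congr rfl fun i _ => by ring)

lemma risingFac_pos {x : ℝ} (hx : 0 < x) (N : ℕ) : 0 < risingFac x N :=
  Finset.prod_pos fun _ _ => by positivity

/-- Generalized Stirling numbers `S_σ(N, j) = C(N, j; σ) / σ ^ j`, via their triangular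
recursion. -/
def genStirling (σ : ℝ) : ℕ → ℕ → ℝ
  | 0, 0 => 1
  | 0, _ + 1 => 0
  | _ + 1, 0 => 0
  | N + 1, j + 1 => genStirling σ N j + ((N : ℝ) - (j + 1) * σ) * genStirling σ N (j + 1)

namespace genStirling

@[simp] lemma zero_zero (σ : ℝ) : genStirling σ 0 0 = 1 := rfl
@[simp] lemma zero_succ (σ : ℝ) (j : ℕ) : genStirling σ 0 (j + 1) = 0 := rfl
@[simp] lemma succ_zero (σ : ℝ) (N : ℕ) : genStirling σ (N + 1) 0 = 0 := rfl

lemma succ_succ (σ : ℝ) (N j : ℕ) : genStirling σ (N + 1) (j + 1) =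
    genStirling σ N j + ((N : ℝ) - (j + 1) * σ) * genStirling σ N (j + 1) := rfl

lemma eq_zero_of_lt (σ : ℝ) {N j : ℕ} (h : N < j) : genStirling σ N j = 0 := by
  induction N generalizing j with
  | zero => obtain ⟨j, rfl⟩ := Nat.exists_eq_add_one.2 h; rfl
  | succ N ih =>
    obtain ⟨j, rfl⟩ := Nat.exists_eq_add_one.2 (Nat.zero_lt_of_lt h)
    rw [succ_succ, ih (by omega), ih (by omega), mul_zero, add_zero]

lemma pos {σ : ℝ} (hσ : σ < 1) {N j : ℕ} (h1 : 1 ≤ j) (h2 : j ≤ N) : 0 < genStirling σ N j := by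
  induction N generalizing j with
  | zero => omega
  | succ N ih =>
    obtain ⟨j, rfl⟩ := Nat.exists_eq_add_one.2 h1
    rw [succ_succ]
    rcases Nat.eq_zero_or_pos j with rfl | hj
    · rcases Nat.eq_zero_or_pos N with rfl | hN
      · simp
      · obtain ⟨N, rfl⟩ := Nat.exists_eq_add_one.2 hN
        have hcoef : 0 < ((N + 1 : ℕ) : ℝ) - (0 + 1) * σ := by push_cast; linarith
        simpa using mul_pos hcoef (ih le_rfl (by omega))
    · have hrest : 0 ≤ ((N : ℝ) - (j + 1) * σ) * genStirling σ N (j + 1) := by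
        rcases le_or_gt (j + 1) N with hle | hlt
        · have : ((j : ℝ) + 1) ≤ N := by exact_mod_cast hle
          exact mul_nonneg (by nlinarith) (ih (by omega) hle).le
        · rw [eq_zero_of_lt σ hlt, mul_zero]
      linarith [ih hj (by omega)]

end genStirling

lemma cgfc_zero_left (j : ℕ) (σ : ℝ) : cgfc 0 j σ = if j = 0 then 1 else 0 := by
  rcases j with _ | j
  · simp [cgfc, gfc, risingFac]
  · have h := Int.alternating_sum_range_choose (n := j + 1)
    rw [if_neg (Nat.succ_ne_zero j)] at h
    have h' : ∑ i ∈ Finset.range (j + 1 + 1), (-1 : ℝ) ^ i * (Nat.choose (j + 1) i : ℝ) = 0 := by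
      exact_mod_cast congrArg (Int.cast : ℤ → ℝ) h
    simp [cgfc, gfc, risingFac_zero, h']

lemma cgfc_succ_zero (N : ℕ) (σ : ℝ) : cgfc (N + 1) 0 σ = 0 := by
  simp [cgfc, gfc, risingFac_succ']

lemma cgfc_succ_succ (N k : ℕ) (σ : ℝ) :
    cgfc (N + 1) (k + 1) σ = σ * cgfc N k σ + ((N : ℝ) - (k + 1) * σ) * cgfc N (k + 1) σ := by
  simp only [cgfc, gfc, sub_zero]
  -- `(k + 1 - i) * C(k + 1, i) = (k + 1) * C(k, i)` lets the factor `N - iσ` of the last step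
  -- be split as `(N - (k + 1)σ) + (k + 1 - i)σ`.
  have hterm : ∀ i ∈ Finset.range (k + 2), (-1 : ℝ) ^ i * (Nat.choose (k + 1) i : ℝ) *
      risingFac (-(i : ℝ) * σ) (N + 1) =
        ((k : ℝ) + 1) * σ * ((-1 : ℝ) ^ i * (Nat.choose k i : ℝ) * risingFac (-(i : ℝ) * σ) N) +
        ((N : ℝ) - (k + 1) * σ) *
          ((-1 : ℝ) ^ i * (Nat.choose (k + 1) i : ℝ) * risingFac (-(i : ℝ) * σ) N) := by
    intro i hi
    have hi : i ≤ k + 1 := Nat.lt_succ_iff.1 (Finset.mem_range.1 hi)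
    have hc : ((k.choose i * (k + 1) : ℕ) : ℝ) = (((k + 1).choose i * (k + 1 - i) : ℕ) : ℝ) := by
      rw [Nat.choose_mul_succ_eq]
    push_cast [Nat.cast_sub hi] at hc
    rw [risingFac_succ]
    linear_combination (-(-1 : ℝ) ^ i * risingFac (-(i : ℝ) * σ) N * σ) * hc
  have hk : ∑ i ∈ Finset.range (k + 2),
      (-1 : ℝ) ^ i * (Nat.choose k i : ℝ) * risingFac (-(i : ℝ) * σ) N =
      ∑ i ∈ Finset.range (k + 1),
        (-1 : ℝ) ^ i * (Nat.choose k i : ℝ) * risingFac (-(i : ℝ) * σ) N := by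
    simp [Finset.sum_range_succ (n := k + 1)]
  have hfac : (Nat.factorial (k + 1) : ℝ) = ((k : ℝ) + 1) * (Nat.factorial k : ℝ) := by
    push_cast [Nat.factorial_succ]; ring
  rw [Finset.sum_congr rfl hterm, Finset.sum_add_distrib, ← Finset.mul_sum, ← Finset.mul_sum, hk,
    hfac]
  field_simp

lemma cgfc_eq_pow_mul_genStirling (σ : ℝ) (N j : ℕ) :
    cgfc N j σ = σ ^ j * genStirling σ N j := by
  induction N generalizing j with
  | zero => rcases j with _ | j <;> simp [cgfc_zero_left]
  | succ N ih =>
    rcases j with _ | j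
    · simp [cgfc_succ_zero]
    · rw [cgfc_succ_succ, ih, ih, genStirling.succ_succ]
      ring

lemma cgfc_one (σ : ℝ) {s : ℕ} (hs : 1 ≤ s) : cgfc s 1 σ = σ * risingFac (1 - σ) (s - 1) := by
  obtain ⟨t, rfl⟩ := Nat.exists_eq_add_one.2 hs
  simp [cgfc, gfc, Finset.sum_range_succ, risingFac_succ', neg_add_eq_sub]

namespace IsPartOn

variable {α : Type*} {s : Finset α} {P : Finset (Finset α)}

lemma subset (h : IsPartOn s P) {B : Finset α} (hB : B ∈ P) : B ⊆ s := h.1 B hB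

lemma ne_empty (h : IsPartOn s P) {B : Finset α} (hB : B ∈ P) : B ≠ ∅ :=
  fun he => h.2.1 (he ▸ hB)

lemma exists_mem (h : IsPartOn s P) {a : α} (ha : a ∈ s) : ∃ B ∈ P, a ∈ B :=
  (h.2.2 a ha).exists

lemma eq_of_mem_of_mem (h : IsPartOn s P) {B₁ B₂ : Finset α} {a : α} (h₁ : B₁ ∈ P)
    (h₂ : B₂ ∈ P) (ha₁ : a ∈ B₁) (ha₂ : a ∈ B₂) : B₁ = B₂ :=
  (h.2.2 a (h.subset h₁ ha₁)).unique ⟨h₁, ha₁⟩ ⟨h₂, ha₂⟩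

lemma notMem_of_notMem (h : IsPartOn s P) {a : α} (ha : a ∉ s) {B : Finset α} (hB : B ∈ P) :
    a ∉ B :=
  fun haB => ha (h.subset hB haB)

lemma singleton_notMem (h : IsPartOn s P) {a : α} (ha : a ∉ s) : {a} ∉ P :=
  fun hm => h.notMem_of_notMem ha hm (Finset.mem_singleton_self a)

lemma sum_card [DecidableEq α] (h : IsPartOn s P) : ∑ B ∈ P, B.card = s.card := by
  have hunion : P.biUnion id = s := by
    ext x
    simp only [Finset.mem_biUnion, id]
    exact ⟨fun ⟨B, hB, hx⟩ => h.subset hB hx, fun hx => h.exists_mem hx⟩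
  rw [← hunion, Finset.card_biUnion]
  · rfl
  · intro B₁ h₁ B₂ h₂ hne
    exact Finset.disjoint_left.2 fun x hx₁ hx₂ => hne (h.eq_of_mem_of_mem h₁ h₂ hx₁ hx₂)

end IsPartOn

section Partitions

variable {α : Type*} [DecidableEq α]

lemma mem_restrictPart {P : Finset (Finset α)} {t B : Finset α} :
    B ∈ restrictPart P t ↔ B ≠ ∅ ∧ ∃ C ∈ P, C ∩ t = B := by
  simp [restrictPart]

lemma isPartOn_restrictPart {s t : Finset α} {P : Finset (Finset α)} (h : IsPartOn s P)
    (hts : t ⊆ s) : IsPartOn t (restrictPart P t) := by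
  refine ⟨fun B hB => ?_, fun hB => (mem_restrictPart.1 hB).1 rfl, fun a hat => ?_⟩
  · obtain ⟨-, C, -, rfl⟩ := mem_restrictPart.1 hB
    exact Finset.inter_subset_right
  · obtain ⟨B, hB, haB⟩ := h.exists_mem (hts hat)
    have haBt : a ∈ B ∩ t := Finset.mem_inter.2 ⟨haB, hat⟩
    refine ⟨B ∩ t, ⟨mem_restrictPart.2 ⟨Finset.ne_empty_of_mem haBt, B, hB, rfl⟩, haBt⟩, ?_⟩
    rintro D ⟨hD, haD⟩
    obtain ⟨-, C, hC, rfl⟩ := mem_restrictPart.1 hD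
    rw [h.eq_of_mem_of_mem hC hB (Finset.mem_inter.1 haD).1 haB]

lemma restrictPart_eq_self {s : Finset α} {P : Finset (Finset α)} (h : IsPartOn s P) :
    restrictPart P s = P := by
  rw [restrictPart, Finset.image_congr (f := fun C => C ∩ s) (g := id)
    fun C hC => Finset.inter_eq_left.2 (h.subset hC), Finset.image_id]
  exact Finset.erase_eq_of_notMem h.2.1

/-- For `c = ∅` this adds the singleton block `{a}`. -/
def insertInto (a : α) (P : Finset (Finset α)) (c : Finset α) : Finset (Finset α) :=
  insert (insert a c) (P.erase c)

lemma isPartOn_insertInto {s : Finset α} {P : Finset (Finset α)} (h : IsPartOn s P) {a : α}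
    (ha : a ∉ s) {c : Finset α} (hc : c ∈ insert ∅ P) :
    IsPartOn (insert a s) (insertInto a P c) := by
  have hcs : c ⊆ s := by
    rcases Finset.mem_insert.1 hc with rfl | hc
    exacts [Finset.empty_subset s, h.subset hc]
  refine ⟨fun B hB => ?_, fun hB => ?_, fun x hx => ?_⟩
  · rcases Finset.mem_insert.1 hB with rfl | hB
    · exact Finset.insert_subset_insert a hcs
    · exact (h.subset (Finset.mem_of_mem_erase hB)).trans (Finset.subset_insert a s)
  · rcases Finset.mem_insert.1 hB with he | hB
    · exact Finset.insert_ne_empty a c he.symm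
    · exact h.2.1 (Finset.mem_of_mem_erase hB)
  · have hunique : ∀ D ∈ P.erase c, x ∈ D → ∀ B, B ∈ insertInto a P c ∧ x ∈ B → B = D := by
      rintro D hD hxD B ⟨hB, hxB⟩
      rcases Finset.mem_insert.1 hB with rfl | hB
      · rcases Finset.mem_insert.1 hxB with rfl | hxc
        · exact absurd (h.subset (Finset.mem_of_mem_erase hD) hxD) ha
        · rcases Finset.mem_insert.1 hc with rfl | hc
          · simp at hxc
          · exact absurd (h.eq_of_mem_of_mem hc (Finset.mem_of_mem_erase hD) hxc hxD).symm
              (Finset.ne_of_mem_erase hD)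
      · exact h.eq_of_mem_of_mem (Finset.mem_of_mem_erase hB) (Finset.mem_of_mem_erase hD) hxB hxD
    by_cases hxc : x ∈ insert a c
    · refine ⟨insert a c, ⟨Finset.mem_insert_self _ _, hxc⟩, fun B hB => ?_⟩
      by_contra hne
      have hB' : B ∈ P.erase c := (Finset.mem_insert.1 hB.1).resolve_left hne
      exact hne (hunique B hB' hB.2 (insert a c) ⟨Finset.mem_insert_self _ _, hxc⟩).symm
    · have hxs : x ∈ s := (Finset.mem_insert.1 hx).resolve_left fun hxa => hxc (hxa ▸
        Finset.mem_insert_self a c)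
      obtain ⟨D, hD, hxD⟩ := h.exists_mem hxs
      have hDc : D ≠ c := fun hDc => hxc (Finset.mem_insert_of_mem (hDc ▸ hxD))
      exact ⟨D, ⟨Finset.mem_insert_of_mem (Finset.mem_erase.2 ⟨hDc, hD⟩), hxD⟩,
        fun B hB => hunique D (Finset.mem_erase.2 ⟨hDc, hD⟩) hxD B hB⟩

lemma restrictPart_insertInto {P : Finset (Finset α)} {t c : Finset α} {a : α} (ha : a ∉ t)
    (hc : c ∈ insert ∅ P) : restrictPart (insertInto a P c) t = restrictPart P t := by
  ext B
  simp only [mem_restrictPart, insertInto, Finset.mem_insert, Finset.mem_erase,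
    exists_eq_or_imp, Finset.insert_inter_of_notMem ha]
  rcases Finset.mem_insert.1 hc with rfl | hc
  · constructor
    · rintro ⟨hB, rfl | ⟨C, ⟨-, hC⟩, rfl⟩⟩
      exacts [absurd (Finset.empty_inter t) hB, ⟨hB, C, hC, rfl⟩]
    · rintro ⟨hB, C, hC, rfl⟩
      by_cases hCe : C = ∅
      · exact absurd (hCe ▸ Finset.empty_inter t) hB
      · exact ⟨hB, Or.inr ⟨C, ⟨hCe, hC⟩, rfl⟩⟩
  · constructor
    · rintro ⟨hB, rfl | ⟨C, ⟨-, hC⟩, rfl⟩⟩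
      exacts [⟨hB, c, hc, rfl⟩, ⟨hB, C, hC, rfl⟩]
    · rintro ⟨hB, C, hC, rfl⟩
      by_cases hCc : C = c
      · exact ⟨hB, Or.inl (hCc ▸ rfl)⟩
      · exact ⟨hB, Or.inr ⟨C, ⟨hCc, hC⟩, rfl⟩⟩

lemma restrictPart_insert_singleton {P : Finset (Finset α)} {t : Finset α} {a : α} (ha : a ∉ t) :
    restrictPart (insert {a} P) t = restrictPart P t := by
  rw [restrictPart, Finset.image_insert, Finset.singleton_inter_of_notMem ha,
    Finset.erase_insert_eq_erase, restrictPart]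

lemma subset_insert_singleton_iff {P U : Finset (Finset α)} {a : α} (hU : ∀ B ∈ U, a ∉ B) :
    U ⊆ insert {a} P ↔ U ⊆ P := by
  refine ⟨fun hsub B hB => ?_, fun hsub => hsub.trans (Finset.subset_insert _ _)⟩
  rcases Finset.mem_insert.1 (hsub hB) with rfl | hB'
  exacts [absurd (Finset.mem_singleton_self a) (hU _ hB), hB']

lemma subset_insertInto_iff {P U : Finset (Finset α)} {C : Finset α} {a : α}
    (hU : ∀ B ∈ U, a ∉ B) : U ⊆ insertInto a P C ↔ U ⊆ P ∧ C ∉ U := by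
  refine ⟨fun hsub => ⟨fun B hB => ?_, fun hCU => ?_⟩, fun ⟨hsub, hCU⟩ B hB => ?_⟩
  · rcases Finset.mem_insert.1 (hsub hB) with rfl | hB'
    exacts [absurd (Finset.mem_insert_self a C) (hU _ hB), Finset.mem_of_mem_erase hB']
  · rcases Finset.mem_insert.1 (hsub hCU) with he | hC'
    · exact hU _ hCU (he ▸ Finset.mem_insert_self a C)
    · exact Finset.ne_of_mem_erase hC' rfl
  · exact Finset.mem_insert_of_mem (Finset.mem_erase.2 ⟨fun hBC => hCU (hBC ▸ hB), hsub hB⟩)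

def blockOf (P : Finset (Finset α)) (a : α) : Finset α :=
  (P.filter fun B => a ∈ B).biUnion id

lemma IsPartOn.blockOf_eq {s : Finset α} {P : Finset (Finset α)} (h : IsPartOn s P)
    {B : Finset α} {a : α} (hB : B ∈ P) (ha : a ∈ B) : blockOf P a = B := by
  have hfilter : P.filter (fun C => a ∈ C) = {B} := by
    ext C
    simp only [Finset.mem_filter, Finset.mem_singleton]
    exact ⟨fun ⟨hC, haC⟩ => h.eq_of_mem_of_mem hC hB haC ha, by rintro rfl; exact ⟨hB, ha⟩⟩
  rw [blockOf, hfilter, Finset.singleton_biUnion, id]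

lemma IsPartOn.insertInto_restrictPart {s : Finset α} {ρ : Finset (Finset α)} {a : α}
    (h : IsPartOn (insert a s) ρ) (ha : a ∉ s) :
    blockOf ρ a ∩ s ∈ insert ∅ (restrictPart ρ s) ∧
      insertInto a (restrictPart ρ s) (blockOf ρ a ∩ s) = ρ := by
  obtain ⟨B₀, hB₀, haB₀⟩ := h.exists_mem (Finset.mem_insert_self a s)
  rw [h.blockOf_eq hB₀ haB₀]
  have hB₀s : insert a (B₀ ∩ s) = B₀ := by
    rw [Finset.insert_inter_distrib, Finset.insert_eq_of_mem haB₀,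
      Finset.inter_eq_left.2 (h.subset hB₀)]
  have hrest : ∀ C ∈ ρ.erase B₀, C ∩ s = C := fun C hC => by
    refine Finset.inter_eq_left.2 fun x hx => ?_
    rcases Finset.mem_insert.1 (h.subset (Finset.mem_of_mem_erase hC) hx) with rfl | hxs
    · exact absurd (h.eq_of_mem_of_mem (Finset.mem_of_mem_erase hC) hB₀ hx haB₀)
        (Finset.ne_of_mem_erase hC)
    · exact hxs
  have hc : B₀ ∩ s ∉ ρ.erase B₀ := fun hc => by
    rcases (B₀ ∩ s).eq_empty_or_nonempty with he | ⟨x, hx⟩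
    · exact h.2.1 (Finset.mem_of_mem_erase (he ▸ hc))
    · exact Finset.ne_of_mem_erase hc (h.eq_of_mem_of_mem (Finset.mem_of_mem_erase hc) hB₀ hx
        (Finset.mem_inter.1 hx).1)
  have hρ : restrictPart ρ s = (insert (B₀ ∩ s) (ρ.erase B₀)).erase ∅ := by
    rw [restrictPart]
    nth_rewrite 1 [← Finset.insert_erase hB₀]
    rw [Finset.image_insert, Finset.image_congr (f := fun C => C ∩ s) (g := id) hrest,
      Finset.image_id]
  have hempty : ∅ ∉ ρ.erase B₀ := fun he => h.2.1 (Finset.mem_of_mem_erase he)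
  rw [hρ, insertInto, hB₀s]
  constructor
  · by_cases hce : B₀ ∩ s = ∅
    · exact hce ▸ Finset.mem_insert_self _ _
    · exact Finset.mem_insert_of_mem (Finset.mem_erase.2 ⟨hce, Finset.mem_insert_self _ _⟩)
  · have herase : ((insert (B₀ ∩ s) (ρ.erase B₀)).erase ∅).erase (B₀ ∩ s) = ρ.erase B₀ := by
      ext D
      rw [Finset.mem_erase, Finset.mem_erase, Finset.mem_insert]
      constructor
      · rintro ⟨hDc, -, rfl | hD⟩
        exacts [absurd rfl hDc, hD]
      · intro hD
        exact ⟨fun hDc => hc (hDc ▸ hD), fun hDe => hempty (hDe ▸ hD), Or.inr hD⟩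
    rw [herase, Finset.insert_erase hB₀]

end Partitions

def partsOn {α : Type*} [Fintype α] (s : Finset α) : Finset (Finset (Finset α)) :=
  Finset.univ.filter (IsPartOn s)

lemma mem_partsOn {α : Type*} [Fintype α] {s : Finset α} {P : Finset (Finset α)} :
    P ∈ partsOn s ↔ IsPartOn s P := by
  simp [partsOn]

lemma partsOn_empty {α : Type*} [Fintype α] : partsOn (∅ : Finset α) = {∅} := by
  ext P
  rw [mem_partsOn, Finset.mem_singleton]
  refine ⟨fun h => Finset.eq_empty_of_forall_notMem fun B hB => h.ne_empty hB
    (Finset.subset_empty.1 (h.subset hB)), ?_⟩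
  rintro rfl
  exact ⟨by simp, by simp, by simp⟩

lemma partsJOf_eq_filter_partsOn {α : Type*} [Fintype α] (s : Finset α) (j : ℕ) :
    partsJOf s j = (partsOn s).filter (fun P => P.card = j) := by
  rw [partsJOf, partsOn, Finset.filter_filter]

def wprod {α : Type*} (σ : ℝ) (P : Finset (Finset α)) : ℝ :=
  ∏ C ∈ P, risingFac (1 - σ) (C.card - 1)

section PartitionSums

variable {α : Type*} [DecidableEq α] [Fintype α]

/-- `ρ ↦ (restriction of ρ to s, trace on s of the block of a)` is inverse to `insertInto a`. -/
lemma sum_partsOn_insert {M : Type*} [AddCommMonoid M] {s : Finset α} {a : α} (ha : a ∉ s)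
    (f : Finset (Finset α) → M) :
    ∑ ρ ∈ partsOn (insert a s), f ρ =
      ∑ P ∈ partsOn s, ∑ c ∈ insert ∅ P, f (insertInto a P c) := by
  rw [Finset.sum_sigma']
  refine Finset.sum_nbij' (fun ρ => ⟨restrictPart ρ s, blockOf ρ a ∩ s⟩)
    (fun p => insertInto a p.1 p.2) (fun ρ hρ => ?_) (fun p hp => ?_) (fun ρ hρ => ?_)
    (fun p hp => ?_) (fun ρ hρ => ?_)
  · have h := mem_partsOn.1 hρ
    exact Finset.mem_sigma.2 ⟨mem_partsOn.2 (isPartOn_restrictPart h (Finset.subset_insert a s)),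
      (h.insertInto_restrictPart ha).1⟩
  · obtain ⟨hP, hc⟩ := Finset.mem_sigma.1 hp
    exact mem_partsOn.2 (isPartOn_insertInto (mem_partsOn.1 hP) ha hc)
  · exact ((mem_partsOn.1 hρ).insertInto_restrictPart ha).2
  · obtain ⟨hP, hc⟩ := Finset.mem_sigma.1 hp
    have h := mem_partsOn.1 hP
    have hcs : p.2 ⊆ s := by
      rcases Finset.mem_insert.1 hc with hce | hc
      exacts [hce ▸ Finset.empty_subset s, h.subset hc]
    have hblock : blockOf (insertInto a p.1 p.2) a = insert a p.2 :=
      (isPartOn_insertInto h ha hc).blockOf_eq (Finset.mem_insert_self _ _)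
        (Finset.mem_insert_self _ _)
    refine Sigma.ext (by rw [restrictPart_insertInto ha hc, restrictPart_eq_self h]) (heq_of_eq ?_)
    rw [hblock, Finset.insert_inter_of_notMem ha, Finset.inter_eq_left.2 hcs]
  · rw [((mem_partsOn.1 hρ).insertInto_restrictPart ha).2]

lemma sum_partsOn_insert' {M : Type*} [AddCommMonoid M] {s : Finset α} {a : α} (ha : a ∉ s)
    (f : Finset (Finset α) → M) :
    ∑ ρ ∈ partsOn (insert a s), f ρ =
      ∑ P ∈ partsOn s, (f (insert {a} P) + ∑ C ∈ P, f (insertInto a P C)) := by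
  rw [sum_partsOn_insert ha]
  refine Finset.sum_congr rfl fun P hP => ?_
  have hempty := (mem_partsOn.1 hP).2.1
  rw [Finset.sum_insert hempty, insertInto, Finset.erase_eq_of_notMem hempty, insert_empty_eq]

end PartitionSums

section InsertWeights

variable {α : Type*} [DecidableEq α] {s : Finset α} {P : Finset (Finset α)} {a : α}

lemma card_insert_singleton (h : IsPartOn s P) (ha : a ∉ s) : (insert {a} P).card = P.card + 1 :=
  Finset.card_insert_of_notMem (h.singleton_notMem ha)

lemma wprod_insert_singleton (h : IsPartOn s P) (ha : a ∉ s) (σ : ℝ) :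
    wprod σ (insert {a} P) = wprod σ P := by
  rw [wprod, Finset.prod_insert (h.singleton_notMem ha), Finset.card_singleton, Nat.sub_self,
    risingFac_zero, one_mul, wprod]

lemma insert_notMem_erase (h : IsPartOn s P) (ha : a ∉ s) (C : Finset α) :
    insert a C ∉ P.erase C :=
  fun hm => h.notMem_of_notMem ha (Finset.mem_of_mem_erase hm) (Finset.mem_insert_self a C)

lemma card_insertInto (h : IsPartOn s P) (ha : a ∉ s) {C : Finset α} (hC : C ∈ P) :
    (insertInto a P C).card = P.card := by
  rw [insertInto, Finset.card_insert_of_notMem (insert_notMem_erase h ha C),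
    Finset.card_erase_add_one hC]

lemma wprod_insertInto (h : IsPartOn s P) (ha : a ∉ s) {C : Finset α} (hC : C ∈ P) (σ : ℝ) :
    wprod σ (insertInto a P C) = ((C.card : ℝ) - σ) * wprod σ P := by
  obtain ⟨c, hc⟩ := Nat.exists_eq_add_one.2 (Finset.card_pos.2
    (Finset.nonempty_iff_ne_empty.2 (h.ne_empty hC)))
  rw [wprod, insertInto, Finset.prod_insert (insert_notMem_erase h ha C),
    Finset.card_insert_of_notMem (h.notMem_of_notMem ha hC), wprod, ← Finset.mul_prod_erase P _ hC,
    hc, Nat.add_sub_cancel, Nat.add_sub_cancel, risingFac_succ]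
  push_cast
  ring

lemma IsPartOn.sum_sdiff_card_sub_mul (h : IsPartOn s P) {U : Finset (Finset α)} (hU : U ⊆ P)
    (σ : ℝ) : ∑ C ∈ P \ U, ((C.card : ℝ) - σ) =
      (s.card - ∑ B ∈ U, (B.card : ℝ)) - (P.card - U.card) * σ := by
  have hsum := Finset.sum_sdiff hU (f := fun C => ((C.card : ℝ) - σ))
  have hcard : ∑ C ∈ P, (C.card : ℝ) = s.card := by exact_mod_cast h.sum_card
  simp only [Finset.sum_sub_distrib, Finset.sum_const, nsmul_eq_mul, hcard] at hsum ⊢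
  linear_combination hsum

end InsertWeights

section Stirling

variable {α : Type*} [DecidableEq α] [Fintype α]

lemma sum_partsJOf_wprod (σ : ℝ) (s : Finset α) (j : ℕ) :
    ∑ P ∈ partsJOf s j, wprod σ P = genStirling σ s.card j := by
  induction s using Finset.induction_on generalizing j with
  | empty =>
    rcases j with _ | j <;>
      simp [partsJOf_eq_filter_partsOn, partsOn_empty, Finset.filter_singleton, wprod]
  | @insert a s ha ih =>
    simp only [partsJOf_eq_filter_partsOn, Finset.sum_filter] at ih ⊢
    rw [sum_partsOn_insert' ha]
    have hterm : ∀ P ∈ partsOn s,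
        ((if (insert {a} P).card = j then wprod σ (insert {a} P) else 0) +
          ∑ C ∈ P, if (insertInto a P C).card = j then wprod σ (insertInto a P C) else 0) =
        (if P.card + 1 = j then wprod σ P else 0) +
          ((s.card : ℝ) - j * σ) * (if P.card = j then wprod σ P else 0) := by
      intro P hP
      have h := mem_partsOn.1 hP
      have hsum : ∑ C ∈ P, ((C.card : ℝ) - σ) = (s.card : ℝ) - P.card * σ := by
        rw [Finset.sum_sub_distrib, ← h.sum_card, Finset.sum_const, nsmul_eq_mul]
        push_cast
        ring
      rw [card_insert_singleton h ha, wprod_insert_singleton h ha,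
        Finset.sum_congr rfl fun C hC => by rw [card_insertInto h ha hC, wprod_insertInto h ha hC]]
      congr 1
      split_ifs with hPj
      · rw [← Finset.sum_mul, hsum, hPj]
      · simp
    rw [Finset.sum_congr rfl hterm, Finset.sum_add_distrib, ← Finset.mul_sum,
      Finset.card_insert_of_notMem ha]
    rcases j with _ | j
    · simp only [Nat.add_one_ne_zero, if_false, Finset.sum_const_zero, zero_add, ih,
        genStirling.succ_zero]
      rcases s.card with _ | N <;> simp
    · simp only [Nat.add_right_cancel_iff, ih, genStirling.succ_succ]
      push_cast
      ring

end Stirling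

section MarkedBlock

variable {α : Type*} [DecidableEq α]

lemma isPartOn_sdiff_erase {s B : Finset α} {P : Finset (Finset α)} (h : IsPartOn s P)
    (hB : B ∈ P) : IsPartOn (s \ B) (P.erase B) := by
  refine ⟨fun D hD x hx => ?_, fun he => h.2.1 (Finset.mem_of_mem_erase he), fun x hx => ?_⟩
  · have hD' := Finset.mem_of_mem_erase hD
    exact Finset.mem_sdiff.2 ⟨h.subset hD' hx,
      fun hxB => Finset.ne_of_mem_erase hD (h.eq_of_mem_of_mem hD' hB hx hxB)⟩
  · obtain ⟨hxs, hxB⟩ := Finset.mem_sdiff.1 hx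
    obtain ⟨D, hD, hxD⟩ := h.exists_mem hxs
    have hDB : D ≠ B := fun he => hxB (he ▸ hxD)
    exact ⟨D, ⟨Finset.mem_erase.2 ⟨hDB, hD⟩, hxD⟩,
      fun E ⟨hE, hxE⟩ => h.eq_of_mem_of_mem (Finset.mem_of_mem_erase hE) hD hxE hxD⟩

lemma isPartOn_insert_of_sdiff {s B : Finset α} {P : Finset (Finset α)} (h : IsPartOn (s \ B) P)
    (hBs : B ⊆ s) (hB : B ≠ ∅) : IsPartOn s (insert B P) := by
  have hdisj : ∀ D ∈ P, ∀ x ∈ D, x ∉ B := fun D hD x hx => (Finset.mem_sdiff.1 (h.subset hD hx)).2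
  refine ⟨fun D hD => ?_, fun he => ?_, fun x hx => ?_⟩
  · rcases Finset.mem_insert.1 hD with rfl | hD
    exacts [hBs, (h.subset hD).trans Finset.sdiff_subset]
  · rcases Finset.mem_insert.1 he with he | he
    exacts [hB he.symm, h.2.1 he]
  · by_cases hxB : x ∈ B
    · refine ⟨B, ⟨Finset.mem_insert_self _ _, hxB⟩, fun E ⟨hE, hxE⟩ => ?_⟩
      rcases Finset.mem_insert.1 hE with rfl | hE
      exacts [rfl, absurd hxB (hdisj E hE x hxE)]
    · obtain ⟨D, hD, hxD⟩ := h.exists_mem (Finset.mem_sdiff.2 ⟨hx, hxB⟩)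
      refine ⟨D, ⟨Finset.mem_insert_of_mem hD, hxD⟩, fun E ⟨hE, hxE⟩ => ?_⟩
      rcases Finset.mem_insert.1 hE with rfl | hE
      exacts [absurd hxE hxB, h.eq_of_mem_of_mem hE hD hxE hxD]

lemma notMem_of_isPartOn_sdiff {s B : Finset α} {P : Finset (Finset α)} (h : IsPartOn (s \ B) P)
    (hB : B ≠ ∅) : B ∉ P := by
  intro hBP
  obtain ⟨x, hx⟩ := Finset.nonempty_iff_ne_empty.2 hB
  exact (Finset.mem_sdiff.1 (h.subset hBP hx)).2 hx

variable [Fintype α]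

/-- A partition with a marked block is the marked block `B` together with a partition of
`s \ B`. -/
lemma sum_partsJOf_sum_mul_wprod (σ : ℝ) (s : Finset α) (j : ℕ) (F : Finset α → ℝ) :
    ∑ π' ∈ partsJOf s (j + 1), (∑ B ∈ π', F B) * wprod σ π' =
      ∑ B ∈ s.powerset.filter (· ≠ ∅),
        F B * risingFac (1 - σ) (B.card - 1) * ∑ P ∈ partsJOf (s \ B) j, wprod σ P := by
  simp only [Finset.sum_mul, Finset.mul_sum]
  rw [Finset.sum_sigma', Finset.sum_sigma']
  simp only [partsJOf_eq_filter_partsOn]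
  refine Finset.sum_nbij' (fun p => ⟨p.2, p.1.erase p.2⟩) (fun p => ⟨insert p.1 p.2, p.1⟩)
    (fun p hp => ?_) (fun p hp => ?_) (fun p hp => ?_) (fun p hp => ?_) (fun p hp => ?_)
  all_goals simp only [Finset.mem_sigma, Finset.mem_filter, mem_partsOn, Finset.mem_powerset]
    at hp ⊢
  · obtain ⟨⟨h, hcard⟩, hB⟩ := hp
    refine ⟨⟨h.subset hB, h.ne_empty hB⟩, isPartOn_sdiff_erase h hB, ?_⟩
    rw [Finset.card_erase_of_mem hB, hcard, Nat.add_sub_cancel]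
  · obtain ⟨⟨hBs, hB⟩, h, hcard⟩ := hp
    refine ⟨⟨isPartOn_insert_of_sdiff h hBs hB, ?_⟩, Finset.mem_insert_self _ _⟩
    rw [Finset.card_insert_of_notMem (notMem_of_isPartOn_sdiff h hB), hcard]
  · exact Sigma.ext (Finset.insert_erase hp.2) HEq.rfl
  · exact Sigma.ext rfl (heq_of_eq (Finset.erase_insert (notMem_of_isPartOn_sdiff hp.2.1 hp.1.2)))
  · rw [wprod, ← Finset.mul_prod_erase _ _ hp.2, wprod, mul_assoc]

end MarkedBlock

lemma sum_powerset_ne_empty_card {β : Type*} [DecidableEq β] (s : Finset β) (g : ℕ → ℝ) :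
    ∑ B ∈ s.powerset.filter (· ≠ ∅), g B.card =
      ∑ k ∈ Finset.Icc 1 s.card, (s.card.choose k : ℝ) * g k := by
  rw [Finset.sum_filter, Finset.sum_congr rfl fun B _ => (if_congr Finset.card_eq_zero.symm.not
    rfl rfl : (if B ≠ ∅ then g B.card else 0) = if B.card ≠ 0 then g B.card else 0),
    Finset.sum_powerset_apply_card (fun k => if k ≠ 0 then g k else 0), Finset.range_eq_Ico,
    Finset.Ico_add_one_right_eq_Icc, ← Finset.insert_Icc_add_one_left_eq_Icc (Nat.zero_le _),
    Finset.sum_insert (by simp)]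
  simp only [ne_eq, not_true_eq_false, if_false, smul_zero, zero_add, nsmul_eq_mul]
  exact Finset.sum_congr rfl fun k hk => by rw [if_pos (by simp at hk; omega)]

lemma sum_partsJOf_gibbsW {α : Type*} [DecidableEq α] [Fintype α] (σ : ℝ) (VN : ℕ → ℝ)
    (s : Finset α) (j : ℕ) :
    ∑ P ∈ partsJOf s j, gibbsW σ VN P = VN j * genStirling σ s.card j := by
  rw [← sum_partsJOf_wprod, Finset.mul_sum]
  refine Finset.sum_congr rfl fun P hP => ?_
  rw [gibbsW, (Finset.mem_filter.1 hP).2.2, wprod]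

lemma sum_partsJOf_sum_card_mul_wprod {α : Type*} [DecidableEq α] [Fintype α] (σ : ℝ)
    (s : Finset α) (j : ℕ) (g : ℕ → ℝ) :
    ∑ π' ∈ partsJOf s (j + 1), (∑ B ∈ π', g B.card) * wprod σ π' =
      ∑ k ∈ Finset.Icc 1 s.card, (s.card.choose k : ℝ) *
        (g k * risingFac (1 - σ) (k - 1) * genStirling σ (s.card - k) j) := by
  rw [sum_partsJOf_sum_mul_wprod, ← sum_powerset_ne_empty_card s
    fun k => g k * risingFac (1 - σ) (k - 1) * genStirling σ (s.card - k) j]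
  refine Finset.sum_congr rfl fun B hB => ?_
  rw [sum_partsJOf_wprod, Finset.card_sdiff_of_subset
    (Finset.mem_powerset.1 (Finset.mem_filter.1 hB).1)]

lemma sum_choose_mul_cgfc_one_mul_cgfc (σ : ℝ) (n j : ℕ) (x : ℕ → ℝ) :
    ∑ k ∈ Finset.Icc 1 (n - j), (n.choose k : ℝ) * x k * cgfc k 1 σ * cgfc (n - k) j σ =
      σ ^ (j + 1) * ∑ k ∈ Finset.Icc 1 n, (n.choose k : ℝ) *
        (x k * risingFac (1 - σ) (k - 1) * genStirling σ (n - k) j) := by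
  rw [Finset.mul_sum]
  refine Finset.sum_subset (Finset.Icc_subset_Icc_right (Nat.sub_le n j)) (fun k hk hkj => ?_)
    |>.symm.trans (Finset.sum_congr rfl fun k hk => ?_) |>.symm
  · rw [genStirling.eq_zero_of_lt σ (by simp only [Finset.mem_Icc] at hk hkj; omega)]
    ring
  · rw [cgfc_one σ (Finset.mem_Icc.1 hk).1, cgfc_eq_pow_mul_genStirling]
    ring

lemma card_oldSet (n m : ℕ) : (oldSet n m).card = n := by
  rw [oldSet, Fin.card_filter_val_lt, min_eq_right (Nat.le_add_right n m)]

lemma EPV_succ_succ_mul (σ : ℝ) {θ : ℝ} {N : ℕ} (hθ : θ + N ≠ 0) (k : ℕ) :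
    EPV σ θ (N + 1) (k + 1) * (θ + N) = EPV σ θ N k * (θ + k * σ) := by
  simp only [EPV, risingFac_succ, Finset.prod_range_succ]
  rcases eq_or_ne (risingFac θ N) 0 with hr | hr
  · simp [hr]
  · field_simp
    simp only [mul_comm σ]
    ring

lemma EPV_succ_mul (σ : ℝ) {θ : ℝ} {N : ℕ} (hθ : θ + N ≠ 0) (k : ℕ) :
    EPV σ θ (N + 1) k * (θ + N) = EPV σ θ N k := by
  simp only [EPV, risingFac_succ]
  rcases eq_or_ne (risingFac θ N) 0 with hr | hr
  · simp [hr]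
  · field_simp
    simp only [mul_comm σ]

section Extensions

variable {α : Type*} [DecidableEq α] [Fintype α] {σ θ : ℝ}

/-- The new point `a` opens a block (weight `θ + |P| σ`) or joins a block `C ∉ U`
(weight `|C| - σ`). -/
lemma sum_extensions_insert {old s : Finset α} {π' U : Finset (Finset α)} {a : α} (ha : a ∉ s)
    (haold : a ∉ old) (hU : ∀ B ∈ U, a ∉ B) (hθ : θ + s.card ≠ 0) :
    (∑ ρ ∈ (partsOn (insert a s)).filter (fun ρ => restrictPart ρ old = π' ∧ U ⊆ ρ),
        EPV σ θ (s.card + 1) ρ.card * wprod σ ρ) * (θ + s.card) =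
      (∑ P ∈ (partsOn s).filter (fun P => restrictPart P old = π' ∧ U ⊆ P),
        EPV σ θ s.card P.card * wprod σ P) *
          (θ + s.card - ∑ B ∈ U, (B.card : ℝ) + U.card * σ) := by
  rw [Finset.sum_filter, Finset.sum_filter, sum_partsOn_insert' ha, Finset.sum_mul,
    Finset.sum_mul]
  refine Finset.sum_congr rfl fun P hP => ?_
  have h := mem_partsOn.1 hP
  by_cases hcond : restrictPart P old = π' ∧ U ⊆ P
  · have hsingle : restrictPart (insert {a} P) old = π' ∧ U ⊆ insert {a} P :=
      ⟨(restrictPart_insert_singleton haold).trans hcond.1,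
        (subset_insert_singleton_iff hU).2 hcond.2⟩
    have hinto : ∀ C ∈ P,
        (if restrictPart (insertInto a P C) old = π' ∧ U ⊆ insertInto a P C then
          EPV σ θ (s.card + 1) (insertInto a P C).card * wprod σ (insertInto a P C) else 0) =
        if C ∉ U then EPV σ θ (s.card + 1) P.card * ((C.card - σ) * wprod σ P) else 0 := by
      intro C hC
      simp only [restrictPart_insertInto haold (Finset.mem_insert_of_mem hC),
        subset_insertInto_iff hU, hcond, true_and, card_insertInto h ha hC,
        wprod_insertInto h ha hC]
    rw [if_pos hsingle, if_pos hcond, Finset.sum_congr rfl hinto, ← Finset.sum_filter,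
      Finset.filter_notMem_eq_sdiff, ← Finset.mul_sum, ← Finset.sum_mul,
      card_insert_singleton h ha, wprod_insert_singleton h ha]
    rw [h.sum_sdiff_card_sub_mul hcond.2]
    linear_combination wprod σ P * EPV_succ_succ_mul σ hθ P.card +
      wprod σ P * ((s.card - ∑ B ∈ U, (B.card : ℝ)) - (P.card - U.card) * σ) *
        EPV_succ_mul σ hθ P.card
  · have hsingle : ¬ (restrictPart (insert {a} P) old = π' ∧ U ⊆ insert {a} P) := by
      rwa [restrictPart_insert_singleton haold, subset_insert_singleton_iff hU]
    rw [if_neg hsingle, if_neg hcond, zero_mul, zero_add]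
    refine mul_eq_zero_of_left (Finset.sum_eq_zero fun C hC => if_neg ?_) _
    rw [restrictPart_insertInto haold (Finset.mem_insert_of_mem hC), subset_insertInto_iff hU]
    tauto

lemma sum_extensions_untouched {old : Finset α} {π' U : Finset (Finset α)} (hπ' : IsPartOn old π')
    (hU : U ⊆ π') (hθ : 0 < θ + old.card) {t : Finset α} (hdisj : Disjoint old t) :
    (∑ ρ ∈ (partsOn (old ∪ t)).filter (fun ρ => restrictPart ρ old = π' ∧ U ⊆ ρ),
        EPV σ θ (old ∪ t).card ρ.card * wprod σ ρ) * risingFac (θ + old.card) t.card =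
      EPV σ θ old.card π'.card * wprod σ π' *
        risingFac (θ + old.card - ∑ B ∈ U, (B.card : ℝ) + U.card * σ) t.card := by
  induction t using Finset.induction_on with
  | empty =>
    have hfilter : (partsOn old).filter (fun ρ => restrictPart ρ old = π' ∧ U ⊆ ρ) = {π'} := by
      ext ρ
      simp only [Finset.mem_filter, mem_partsOn, Finset.mem_singleton]
      refine ⟨fun ⟨hρ, hres, _⟩ => (restrictPart_eq_self hρ).symm.trans hres, ?_⟩
      rintro rfl
      exact ⟨hπ', restrictPart_eq_self hπ', hU⟩
    rw [Finset.union_empty, hfilter, Finset.sum_singleton, Finset.card_empty, risingFac_zero,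
      risingFac_zero, mul_one]
  | @insert a t hat ih =>
    rw [Finset.disjoint_insert_right] at hdisj
    have hcard : (old ∪ t).card = old.card + t.card := Finset.card_union_of_disjoint hdisj.2
    have hθ' : θ + (old ∪ t).card ≠ 0 := by
      rw [hcard, Nat.cast_add, ← add_assoc]
      exact (add_pos_of_pos_of_nonneg hθ (Nat.cast_nonneg _)).ne'
    have hstep := sum_extensions_insert (σ := σ) (π' := π') (U := U)
      (fun ha => (Finset.mem_union.1 ha).elim hdisj.1 hat) hdisj.1
      (fun B hB haB => hdisj.1 (hπ'.subset (hU hB) haB)) hθ'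
    rw [Finset.union_insert, Finset.card_insert_of_notMem hat, risingFac_succ, risingFac_succ,
      Finset.card_insert_of_notMem fun ha => (Finset.mem_union.1 ha).elim hdisj.1 hat]
    have ih := ih hdisj.2
    rw [hcard] at ih hstep ⊢
    push_cast at ih hstep ⊢
    linear_combination risingFac (θ + old.card) t.card * hstep +
      (θ + old.card + t.card - ∑ B ∈ U, (B.card : ℝ) + U.card * σ) * ih

end Extensions

lemma exists_block_sdiff_ne_empty_iff {α : Type*} [DecidableEq α] {s old Bi : Finset α}
    {ρ : Finset (Finset α)} (hρ : IsPartOn s ρ) (hBi : Bi ∈ restrictPart ρ old) :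
    (∃ C ∈ ρ, Bi ⊆ C ∧ C \ old ≠ ∅) ↔ Bi ∉ ρ := by
  obtain ⟨hne, C₀, hC₀, rfl⟩ := mem_restrictPart.1 hBi
  constructor
  · rintro ⟨C, hC, hsub, hnew⟩ hmem
    obtain ⟨x, hx⟩ := Finset.nonempty_iff_ne_empty.2 hne
    rw [← hρ.eq_of_mem_of_mem hmem hC hx (hsub hx)] at hnew
    exact hnew (Finset.sdiff_eq_empty_iff_subset.2 Finset.inter_subset_right)
  · intro hnotMem
    refine ⟨C₀, hC₀, Finset.inter_subset_left, fun hempty => hnotMem ?_⟩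
    rwa [Finset.inter_eq_left.2 (Finset.sdiff_eq_empty_iff_subset.1 hempty)]

lemma Rcnt_eq_card_sub_sum {n m : ℕ} {ρ : Finset (Finset (Fin (n + m)))}
    (hρ : IsPartOn Finset.univ ρ) :
    (Rcnt n m ρ : ℝ) = (restrictPart ρ (oldSet n m)).card -
      ∑ B ∈ restrictPart ρ (oldSet n m), if B ∈ ρ then 1 else 0 := by
  have hRcnt : Rcnt n m ρ = ((restrictPart ρ (oldSet n m)).filter (· ∉ ρ)).card :=
    congrArg Finset.card (Finset.filter_congr fun _ hBi => exists_block_sdiff_ne_empty_iff hρ hBi)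
  have hsplit := Finset.card_filter_add_card_filter_not (s := restrictPart ρ (oldSet n m)) (· ∈ ρ)
  rw [hRcnt, ← Finset.sum_filter, Finset.sum_const, nsmul_one, ← hsplit]
  push_cast
  ring

lemma sum_withJ_eq_sum_extensions {M : Type*} [AddCommMonoid M] (n m j : ℕ)
    (f : Finset (Finset (Fin (n + m))) → M) :
    ∑ ρ ∈ withJ n m j, f ρ = ∑ π' ∈ partsJOf (oldSet n m) j, ∑ ρ ∈ extensions n m π', f ρ := by
  rw [← Finset.sum_fiberwise_of_maps_to (g := fun ρ => restrictPart ρ (oldSet n m))]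
  · refine Finset.sum_congr rfl fun π' hπ' => Finset.sum_congr ?_ fun _ _ => rfl
    ext ρ
    simp only [withJ, extensions, Finset.mem_filter, Finset.mem_univ, true_and]
    constructor
    · exact fun ⟨⟨hρ, _⟩, hres⟩ => ⟨hρ, hres⟩
    · rintro ⟨hρ, rfl⟩
      exact ⟨⟨hρ, (Finset.mem_filter.1 hπ').2.2⟩, rfl⟩
  · intro ρ hρ
    obtain ⟨-, hρ, hcard⟩ := Finset.mem_filter.1 hρ
    exact Finset.mem_filter.2 ⟨Finset.mem_univ _,
      isPartOn_restrictPart hρ (Finset.subset_univ _), hcard⟩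

lemma sum_gibbsW_EPV_untouched {n m : ℕ} {σ θ : ℝ} {π' U : Finset (Finset (Fin (n + m)))}
    (hπ' : IsPartOn (oldSet n m) π') (hU : U ⊆ π') (hθ : 0 < θ + n) :
    ∑ ρ ∈ (partsOn Finset.univ).filter (fun ρ => restrictPart ρ (oldSet n m) = π' ∧ U ⊆ ρ),
        gibbsW σ (EPV σ θ (n + m)) ρ = EPV σ θ n π'.card * wprod σ π' *
          (risingFac (θ + n - ∑ B ∈ U, (B.card : ℝ) + U.card * σ) m / risingFac (θ + n) m) := by
  have h := sum_extensions_untouched (σ := σ) hπ' hU (by rwa [card_oldSet])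
    (disjoint_compl_right (a := oldSet n m))
  rw [Finset.union_compl, Finset.card_univ, Fintype.card_fin, Finset.card_compl,
    Fintype.card_fin, card_oldSet, Nat.add_sub_cancel_left] at h
  rw [mul_div_assoc', eq_div_iff (risingFac_pos hθ m).ne', ← h]
  rfl

/-- An old block is re-observed iff it is not itself a block of `ρ`; the extensions in which
`B` survives are those of `sum_gibbsW_EPV_untouched` with `U = {B}`. -/
lemma sum_extensions_Rcnt_mul_gibbsW {n m : ℕ} {σ θ : ℝ} {π' : Finset (Finset (Fin (n + m)))}
    (hπ' : IsPartOn (oldSet n m) π') (hθ : 0 < θ + n) :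
    ∑ ρ ∈ extensions n m π', (Rcnt n m ρ : ℝ) * gibbsW σ (EPV σ θ (n + m)) ρ =
      EPV σ θ n π'.card * wprod σ π' * (π'.card -
        ∑ B ∈ π', risingFac (θ + n - B.card + σ) m / risingFac (θ + n) m) := by
  have hext : extensions n m π' =
      (partsOn Finset.univ).filter (fun ρ => restrictPart ρ (oldSet n m) = π') := by
    rw [extensions, partsOn, Finset.filter_filter]
  have hRcnt : ∀ ρ ∈ extensions n m π', (Rcnt n m ρ : ℝ) * gibbsW σ (EPV σ θ (n + m)) ρ =
      π'.card * gibbsW σ (EPV σ θ (n + m)) ρ -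
        ∑ B ∈ π', if B ∈ ρ then gibbsW σ (EPV σ θ (n + m)) ρ else 0 := by
    intro ρ hρ
    obtain ⟨-, hρ, hres⟩ := Finset.mem_filter.1 hρ
    simp only [Rcnt_eq_card_sub_sum hρ, hres, sub_mul, Finset.sum_mul, ite_mul, one_mul, zero_mul]
  have hempty := sum_gibbsW_EPV_untouched (σ := σ) hπ' (Finset.empty_subset π') hθ
  simp only [Finset.empty_subset, and_true, Finset.sum_empty, Finset.card_empty, CharP.cast_eq_zero,
    zero_mul, sub_zero, add_zero, div_self (risingFac_pos hθ m).ne', mul_one] at hempty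
  rw [Finset.sum_congr rfl hRcnt, Finset.sum_sub_distrib, ← Finset.mul_sum, Finset.sum_comm, hext]
  simp only [← Finset.sum_filter, Finset.filter_filter]
  rw [hempty, Finset.sum_congr rfl fun B hB => by
    simpa using sum_gibbsW_EPV_untouched hπ' (Finset.singleton_subset_iff.2 hB) hθ,
    ← Finset.mul_sum]
  ring

lemma sum_withJ_Rcnt_mul_gibbsW {n m k : ℕ} {σ θ : ℝ} (hθ : 0 < θ + n) :
    ∑ ρ ∈ withJ n m (k + 1), (Rcnt n m ρ : ℝ) * gibbsW σ (EPV σ θ (n + m)) ρ =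
      EPV σ θ n (k + 1) * ((k + 1) * genStirling σ n (k + 1) -
        (∑ s ∈ Finset.Icc 1 n, (n.choose s : ℝ) * (risingFac (θ + n - s + σ) m *
          risingFac (1 - σ) (s - 1) * genStirling σ (n - s) k)) / risingFac (θ + n) m) := by
  have hfib : ∀ π' ∈ partsJOf (oldSet n m) (k + 1),
      ∑ ρ ∈ extensions n m π', (Rcnt n m ρ : ℝ) * gibbsW σ (EPV σ θ (n + m)) ρ =
        EPV σ θ n (k + 1) * ((k + 1) * wprod σ π' -
          (∑ B ∈ π', risingFac (θ + n - B.card + σ) m) * wprod σ π' / risingFac (θ + n) m) := by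
    intro π' hπ'
    obtain ⟨-, hπ', hcard⟩ := Finset.mem_filter.1 hπ'
    rw [sum_extensions_Rcnt_mul_gibbsW hπ' hθ, hcard, ← Finset.sum_div]
    push_cast
    ring
  rw [sum_withJ_eq_sum_extensions, Finset.sum_congr rfl hfib, ← Finset.mul_sum,
    Finset.sum_sub_distrib, ← Finset.sum_div, ← Finset.mul_sum, sum_partsJOf_wprod,
    sum_partsJOf_sum_card_mul_wprod σ _ k fun b => risingFac (θ + n - b + σ) m, card_oldSet]

theorem looking_backward_estimator_incomplete_EP_general
    (n m j : ℕ) (hj1 : 1 ≤ j) (hjn : j ≤ n)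
    (σ θ : ℝ) (hσ0 : 0 < σ) (hσ1 : σ < 1) (hθ : -σ < θ)
    (hVnj : 0 < EPV σ θ n j) :
    condExpK σ (EPV σ θ) n m j (fun ρ => (Rcnt n m ρ : ℝ)) =
      (j : ℝ) -
        (1 / (cgfc n j σ * risingFac (θ + n) m)) *
          ∑ s ∈ Finset.Icc 1 (n - (j - 1)),
            (Nat.choose n s : ℝ) * risingFac (θ + (n : ℝ) - (s : ℝ) + σ) m *
              cgfc s 1 σ * cgfc (n - s) (j - 1) σ := by
  obtain ⟨k, rfl⟩ := Nat.exists_eq_add_one.2 hj1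
  have hθn : 0 < θ + n := by
    have : (1 : ℝ) ≤ n := by exact_mod_cast hj1.trans hjn
    linarith
  rw [condExpK, sum_withJ_Rcnt_mul_gibbsW hθn, sum_partsJOf_gibbsW, card_oldSet,
    Nat.add_sub_cancel, sum_choose_mul_cgfc_one_mul_cgfc, cgfc_eq_pow_mul_genStirling]
  have hR := (risingFac_pos hθn m).ne'
  have hS := (genStirling.pos hσ1 hj1 hjn).ne'
  field_simp
  push_cast
  ring

/-- Ewens–Pitman, expected number of re-observed old species,
given only the number of blocks. -/
theorem looking_backward_estimator_incomplete_EP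
    (n m j : ℕ) (hn : 1 ≤ n) (hm : 1 ≤ m) (hj1 : 1 ≤ j) (hjn : j ≤ n)
    (σ θ : ℝ) (hσ0 : 0 < σ) (hσ1 : σ < 1) (hθ : -σ < θ)
    (hVnj : 0 < EPV σ θ n j) :
    condExpK σ (EPV σ θ) n m j (fun ρ => (Rcnt n m ρ : ℝ)) =
      (j : ℝ) -
        (1 / (cgfc n j σ * risingFac (θ + n) m)) *
          ∑ s ∈ Finset.Icc 1 (n - (j - 1)),
            (Nat.choose n s : ℝ) * risingFac (θ + (n : ℝ) - (s : ℝ) + σ) m *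
              cgfc s 1 σ * cgfc (n - s) (j - 1) σ :=
  looking_backward_estimator_incomplete_EP_general n m j hj1 hjn σ θ hσ0 hσ1 hθ hVnj
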